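/- arXiv:1410.8471 — 5 statements merged into one kernel-verified Lean document; each statement's English description precedes it below -/
import Mathlib

section
/- Let δ > 0 and k > 1 a real number. Suppose F : (0, δ) → ℝ is continuously differentiable with ∫₀^δ r^k (F(r)² + F'(r)²) dr < ∞. Then ∫₀^δ r^{k-2} F(r)² dr ≤ C(δ,k) ∫₀^δ r^k (F(r)² + F'(r)²) dr for a constant C(δ,k) depending only on δ and k. -/
/-!
Integrating `(r ^ (k - 1) F ^ 2)' = (k - 1) r ^ (k - 2) F ^ 2 + 2 r ^ (k - 1) F F'` over `(a, b]`
and absorbing the cross term by AM-GM,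
`2 r ^ (k - 1) |F F'| ≤ (k - 1) / 2 · r ^ (k - 2) F ^ 2 + 2 / (k - 1) · r ^ k F' ^ 2`,
bounds `∫ₐᵇ r ^ (k - 2) F ^ 2` by `b ^ (k - 1) F(b) ^ 2` plus the weighted energy, uniformly in
`a > 0` because `k > 1` lets us drop `-a ^ (k - 1) F(a) ^ 2`; then let `a → 0`.
Choosing `b ∈ (δ/2, δ)` where `r ^ k (F ^ 2 + F' ^ 2)` is at most its mean controls `F(b) ^ 2`,
and on `(b, δ)` simply `r ^ (k - 2) ≤ (2 / δ) ^ 2 r ^ k`.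
-/

open Real MeasureTheory Set Topology

lemma neg_le_rpow_sub_one_mul_two_mul {k r ε : ℝ} (hr : 0 < r) (hε : 0 < ε) (A B : ℝ) :
    -(ε * (r ^ (k - 2) * A ^ 2) + ε⁻¹ * (r ^ k * B ^ 2)) ≤ r ^ (k - 1) * (2 * A * B) := by
  have hsq : (r ^ (k - 1)) ^ 2 = r ^ (k - 2) * r ^ k := by
    rw [← rpow_natCast, ← rpow_mul hr.le, ← rpow_add hr]
    ring_nf
  have hR : 0 < ε * r ^ k := by positivity
  have hsum :
      0 ≤ ε * (r ^ (k - 2) * A ^ 2) + ε⁻¹ * (r ^ k * B ^ 2) + r ^ (k - 1) * (2 * A * B) := by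
    refine nonneg_of_mul_nonneg_right ?_ hR
    have : ε * r ^ k * (ε * (r ^ (k - 2) * A ^ 2) + ε⁻¹ * (r ^ k * B ^ 2) +
        r ^ (k - 1) * (2 * A * B)) = (ε * r ^ (k - 1) * A + r ^ k * B) ^ 2 := by
      field_simp
      linear_combination (-(ε ^ 2 * A ^ 2)) * hsq
    rw [this]
    positivity
  linarith

lemma hasDerivAt_rpow_mul_sq {F : ℝ → ℝ} {F' p r : ℝ} (hr : 0 < r) (hF : HasDerivAt F F' r) :
    HasDerivAt (fun x => x ^ p * F x ^ 2)
      (p * r ^ (p - 1) * F r ^ 2 + r ^ p * (2 * F r * F')) r := by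
  have hsq : HasDerivAt (fun x => F x ^ 2) (2 * F r * F') r :=
    (hF.pow 2).congr_deriv (by ring)
  exact (hasDerivAt_rpow_const (Or.inl hr.ne')).mul hsq

lemma hardy_Ioc_of_pos {k a b : ℝ} (hk : 1 < k) (ha : 0 < a) (hab : a ≤ b) {F F' : ℝ → ℝ}
    (hF : ∀ r ∈ Icc a b, HasDerivAt F (F' r) r) (hF' : ContinuousOn F' (Icc a b)) :
    ∫ r in Ioc a b, r ^ (k - 2) * F r ^ 2 ≤
      2 / (k - 1) * (b ^ (k - 1) * F b ^ 2 + 2 / (k - 1) * ∫ r in Ioc a b, r ^ k * F' r ^ 2) := by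
  have hk1 : 0 < k - 1 := by linarith
  have hpos : ∀ r ∈ Icc a b, 0 < r := fun r hr => ha.trans_le hr.1
  have hFc : ContinuousOn F (Icc a b) := fun r hr => (hF r hr).continuousAt.continuousWithinAt
  have hpow (p : ℝ) : ContinuousOn (fun r : ℝ => r ^ p) (Icc a b) :=
    continuousOn_id.rpow_const fun r hr => Or.inl (hpos r hr).ne'
  have hg : IntervalIntegrable (fun r => r ^ (k - 2) * F r ^ 2) volume a b :=
    ((hpow _).mul (hFc.pow 2)).intervalIntegrable_of_Icc hab
  have hw : IntervalIntegrable (fun r => r ^ k * F' r ^ 2) volume a b :=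
    ((hpow _).mul (hF'.pow 2)).intervalIntegrable_of_Icc hab
  set G' := fun r => (k - 1) * r ^ (k - 1 - 1) * F r ^ 2 + r ^ (k - 1) * (2 * F r * F' r)
  have hG' : IntervalIntegrable G' volume a b :=
    (((continuousOn_const.mul (hpow _)).mul (hFc.pow 2)).add
      ((hpow _).mul ((continuousOn_const.mul hFc).mul hF'))).intervalIntegrable_of_Icc hab
  have hftc : ∫ r in a..b, G' r = b ^ (k - 1) * F b ^ 2 - a ^ (k - 1) * F a ^ 2 :=
    intervalIntegral.integral_eq_sub_of_hasDerivAt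
      (fun r hr => hasDerivAt_rpow_mul_sq (hpos r (uIcc_of_le hab ▸ hr))
        (hF r (uIcc_of_le hab ▸ hr))) hG'
  -- AM-GM with `ε = (k - 1) / 2` absorbs half of the `r ^ (k - 2) * F r ^ 2` term.
  have hle : ∫ r in a..b,
      ((k - 1) / 2 * (r ^ (k - 2) * F r ^ 2) - 2 / (k - 1) * (r ^ k * F' r ^ 2))
        ≤ ∫ r in a..b, G' r := by
    refine intervalIntegral.integral_mono_on hab ((hg.const_mul _).sub (hw.const_mul _)) hG'
      fun r hr => ?_
    have := neg_le_rpow_sub_one_mul_two_mul (k := k) (hpos r hr) (half_pos hk1) (F r) (F' r)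
    rw [inv_div] at this
    simp only [G', show k - 1 - 1 = k - 2 by ring]
    linarith
  rw [hftc, intervalIntegral.integral_sub (hg.const_mul _) (hw.const_mul _),
    intervalIntegral.integral_const_mul, intervalIntegral.integral_const_mul,
    intervalIntegral.integral_of_le hab, intervalIntegral.integral_of_le hab] at hle
  have ha_term : 0 ≤ a ^ (k - 1) * F a ^ 2 := by positivity
  calc ∫ r in Ioc a b, r ^ (k - 2) * F r ^ 2
      = 2 / (k - 1) * ((k - 1) / 2 * ∫ r in Ioc a b, r ^ (k - 2) * F r ^ 2) := by
        field_simp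
    _ ≤ _ := by gcongr; linarith

lemma setIntegral_Ioc_le_of_forall_Ioc_le {g : ℝ → ℝ} {c b M : ℝ} (hcb : c < b)
    (hg : ∀ x ∈ Ioc c b, 0 ≤ g x) (hM : ∀ a ∈ Ioo c b, ∫ x in Ioc a b, g x ≤ M) :
    ∫ x in Ioc c b, g x ≤ M := by
  by_cases hint : IntegrableOn g (Ioc c b)
  · have hcont : ContinuousWithinAt (fun a => ∫ x in a..b, g x) (Ioo c b) c := by
      refine ((intervalIntegral.continuousOn_primitive_interval_left (a := c) ?_) c ?_).mono ?_
      · rwa [uIcc_of_le hcb.le, integrableOn_Icc_iff_integrableOn_Ioc]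
      · simp
      · rw [uIcc_of_le hcb.le]; exact Ioo_subset_Icc_self
    have : (𝓝[Ioo c b] c).NeBot := by rw [nhdsWithin_Ioo_eq_nhdsGT hcb]; infer_instance
    rw [← intervalIntegral.integral_of_le hcb.le]
    refine le_of_tendsto hcont (eventually_nhdsWithin_of_forall fun a ha => ?_)
    rw [intervalIntegral.integral_of_le ha.2.le]
    exact hM a ha
  · rw [integral_undef hint]
    have hmid : (c + b) / 2 ∈ Ioo c b := ⟨by linarith, by linarith⟩
    exact (setIntegral_nonneg measurableSet_Ioc fun x hx =>
      hg x (Ioc_subset_Ioc_left hmid.1.le hx)).trans (hM _ hmid)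

theorem hardy_Ioc_zero {k b : ℝ} (hk : 1 < k) (hb : 0 < b) {F F' : ℝ → ℝ}
    (hF : ∀ r ∈ Ioc 0 b, HasDerivAt F (F' r) r) (hF' : ContinuousOn F' (Ioc 0 b))
    (hw : IntegrableOn (fun r => r ^ k * F' r ^ 2) (Ioc 0 b)) :
    ∫ r in Ioc 0 b, r ^ (k - 2) * F r ^ 2 ≤
      2 / (k - 1) * (b ^ (k - 1) * F b ^ 2 + 2 / (k - 1) * ∫ r in Ioc 0 b, r ^ k * F' r ^ 2) := by
  have hk1 : 0 < k - 1 := by linarith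
  refine setIntegral_Ioc_le_of_forall_Ioc_le hb (fun r hr => by have := hr.1; positivity)
    fun a ha => ?_
  have hsub : Icc a b ⊆ Ioc 0 b := Icc_subset_Ioc_iff ha.2.le |>.mpr ⟨ha.1, le_rfl⟩
  refine (hardy_Ioc_of_pos hk ha.1 ha.2.le (fun r hr => hF r (hsub hr)) (hF'.mono hsub)).trans
    ?_
  gcongr
  · exact ae_restrict_of_forall_mem measurableSet_Ioc fun r hr => by have := hr.1; positivity
  · exact ha.1.le

lemma exists_mem_Ioo_le_inv_sub_mul_setIntegral {f : ℝ → ℝ} {a b : ℝ} (hab : a < b)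
    (hf : IntegrableOn f (Ioo a b)) : ∃ x ∈ Ioo a b, f x ≤ (b - a)⁻¹ * ∫ x in Ioo a b, f x := by
  obtain ⟨x, hx, hle⟩ := exists_le_setAverage (by simp [hab]) (by simp) hf
  rw [setAverage_eq, measureReal_def, Real.volume_Ioo, ENNReal.toReal_ofReal (sub_pos.2 hab).le,
    smul_eq_mul] at hle
  exact ⟨x, hx, hle⟩

-- No integrability is assumed: a non-integrable `f` has integral `0`.
lemma setIntegral_union_le_add {α : Type*} [MeasurableSpace α] {μ : Measure α} {f : α → ℝ}
    {s t : Set α} (hst : Disjoint s t) (hs : MeasurableSet s) (ht : MeasurableSet t)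
    (hf : ∀ x ∈ s ∪ t, 0 ≤ f x) :
    ∫ x in s ∪ t, f x ∂μ ≤ ∫ x in s, f x ∂μ + ∫ x in t, f x ∂μ := by
  by_cases hint : IntegrableOn f (s ∪ t) μ
  · exact (setIntegral_union hst ht (hint.mono_set subset_union_left)
      (hint.mono_set subset_union_right)).le
  · rw [integral_undef hint]
    exact add_nonneg (setIntegral_nonneg hs fun x hx => hf x (Or.inl hx))
      (setIntegral_nonneg ht fun x hx => hf x (Or.inr hx))

lemma rpow_sub_two_le_inv_sq_mul_rpow {k c r : ℝ} (hc : 0 < c) (hcr : c ≤ r) :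
    r ^ (k - 2) ≤ c⁻¹ ^ 2 * r ^ k := by
  have hr : 0 < r := hc.trans_le hcr
  rw [rpow_sub hr, rpow_two, div_eq_mul_inv, mul_comm, ← inv_pow]
  gcongr

section WeightedEnergy

variable {δ k : ℝ} {F F' : ℝ → ℝ}

lemma setIntegral_rpow_mul_sq_add_sq_le_of_subset
    (hInt : IntegrableOn (fun r => r ^ k * (F r ^ 2 + F' r ^ 2)) (Ioo 0 δ)) {s : Set ℝ}
    (hs : s ⊆ Ioo 0 δ) :
    ∫ r in s, r ^ k * (F r ^ 2 + F' r ^ 2) ≤ ∫ r in Ioo 0 δ, r ^ k * (F r ^ 2 + F' r ^ 2) := by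
  gcongr
  exact ae_restrict_of_forall_mem measurableSet_Ioo fun r hr => by have := hr.1; positivity

lemma exists_mem_Ioo_rpow_sub_one_mul_sq_le (hδ : 0 < δ)
    (hInt : IntegrableOn (fun r => r ^ k * (F r ^ 2 + F' r ^ 2)) (Ioo 0 δ)) :
    ∃ b ∈ Ioo (δ / 2) δ,
      b ^ (k - 1) * F b ^ 2 ≤ (2 / δ) ^ 2 * ∫ r in Ioo 0 δ, r ^ k * (F r ^ 2 + F' r ^ 2) := by
  have hsub : Ioo (δ / 2) δ ⊆ Ioo 0 δ := Ioo_subset_Ioo_left (half_pos hδ).le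
  obtain ⟨b, hb, hmean⟩ :=
    exists_mem_Ioo_le_inv_sub_mul_setIntegral (half_lt_self hδ) (hInt.mono_set hsub)
  have hb0 : 0 < b := (half_pos hδ).trans hb.1
  have hmean' : b ^ k * F b ^ 2 ≤ 2 / δ * ∫ r in Ioo 0 δ, r ^ k * (F r ^ 2 + F' r ^ 2) := by
    refine le_trans ?_ (hmean.trans ?_)
    · gcongr
      exact le_add_of_nonneg_right (sq_nonneg _)
    · rw [show δ - δ / 2 = δ / 2 by ring, inv_div]
      gcongr 2 / δ * ?_
      exact setIntegral_rpow_mul_sq_add_sq_le_of_subset hInt hsub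
  refine ⟨b, hb, ?_⟩
  calc b ^ (k - 1) * F b ^ 2 = b⁻¹ * (b ^ k * F b ^ 2) := by rw [rpow_sub_one hb0.ne']; ring
    _ ≤ (δ / 2)⁻¹ * (2 / δ * ∫ r in Ioo 0 δ, r ^ k * (F r ^ 2 + F' r ^ 2)) := by
        gcongr
        exact hb.1.le
    _ = _ := by rw [inv_div]; ring

lemma setIntegral_Ioc_rpow_sub_two_mul_sq_le (hk : 1 < k) {b : ℝ} (hb : b ∈ Ioo 0 δ)
    (hF : ∀ r ∈ Ioo 0 δ, HasDerivAt F (F' r) r) (hF' : ContinuousOn F' (Ioo 0 δ))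
    (hInt : IntegrableOn (fun r => r ^ k * (F r ^ 2 + F' r ^ 2)) (Ioo 0 δ)) :
    ∫ r in Ioc 0 b, r ^ (k - 2) * F r ^ 2 ≤ 2 / (k - 1) * (b ^ (k - 1) * F b ^ 2 +
      2 / (k - 1) * ∫ r in Ioo 0 δ, r ^ k * (F r ^ 2 + F' r ^ 2)) := by
  have hk1 : 0 < k - 1 := by linarith
  have hsub : Ioc 0 b ⊆ Ioo 0 δ := Ioc_subset_Ioo_right hb.2
  have hle : ∀ r ∈ Ioc 0 b, r ^ k * F' r ^ 2 ≤ r ^ k * (F r ^ 2 + F' r ^ 2) := fun r hr => by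
    have := hr.1
    gcongr
    exact le_add_of_nonneg_left (sq_nonneg _)
  have hw : IntegrableOn (fun r => r ^ k * F' r ^ 2) (Ioc 0 b) := by
    refine (hInt.mono_set hsub).mono' ?_ (ae_restrict_of_forall_mem measurableSet_Ioc
      fun r hr => ?_)
    · exact ((continuousOn_id.rpow_const fun r hr => Or.inl hr.1.ne').mul
        ((hF'.mono hsub).pow 2)).aestronglyMeasurable measurableSet_Ioc
    · have := hr.1
      rw [norm_of_nonneg (by positivity)]
      exact hle r hr
  refine (hardy_Ioc_zero hk hb.1 (fun r hr => hF r (hsub hr)) (hF'.mono hsub) hw).trans ?_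
  gcongr
  exact (setIntegral_mono_on hw (hInt.mono_set hsub) measurableSet_Ioc hle).trans
    (setIntegral_rpow_mul_sq_add_sq_le_of_subset hInt hsub)

lemma setIntegral_Ioo_rpow_sub_two_mul_sq_le (hδ : 0 < δ) {b : ℝ} (hb : δ / 2 ≤ b)
    (hInt : IntegrableOn (fun r => r ^ k * (F r ^ 2 + F' r ^ 2)) (Ioo 0 δ)) :
    ∫ r in Ioo b δ, r ^ (k - 2) * F r ^ 2 ≤
      (2 / δ) ^ 2 * ∫ r in Ioo 0 δ, r ^ k * (F r ^ 2 + F' r ^ 2) := by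
  have hsub : Ioo b δ ⊆ Ioo 0 δ := Ioo_subset_Ioo_left ((half_pos hδ).le.trans hb)
  have hle : ∀ r ∈ Ioo b δ,
      r ^ (k - 2) * F r ^ 2 ≤ (2 / δ) ^ 2 * (r ^ k * (F r ^ 2 + F' r ^ 2)) := fun r hr => by
    have := (hsub hr).1
    calc r ^ (k - 2) * F r ^ 2 ≤ (δ / 2)⁻¹ ^ 2 * r ^ k * F r ^ 2 := by
          gcongr
          exact rpow_sub_two_le_inv_sq_mul_rpow (half_pos hδ) (hb.trans hr.1.le)
      _ ≤ (2 / δ) ^ 2 * (r ^ k * (F r ^ 2 + F' r ^ 2)) := by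
          rw [inv_div, mul_assoc]
          gcongr
          exact le_add_of_nonneg_right (sq_nonneg _)
  refine (integral_mono_of_nonneg (ae_restrict_of_forall_mem measurableSet_Ioo fun r hr => ?_)
    ((hInt.mono_set hsub).const_mul _)
    (ae_restrict_of_forall_mem measurableSet_Ioo hle)).trans ?_
  · have := (hsub hr).1
    positivity
  rw [integral_const_mul]
  gcongr (2 / δ) ^ 2 * ?_
  exact setIntegral_rpow_mul_sq_add_sq_le_of_subset hInt hsub

end WeightedEnergy

/-- Weighted Hardy inequality on `(0, δ)` with power weight `r^k`, `k > 1`: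
`∫₀^δ r^{k-2} F² dr ≤ C(δ,k) ∫₀^δ r^k (F² + F'²) dr`. -/
theorem hardy_inequality_power_weight (δ k : ℝ) (hδ : 0 < δ) (hk : 1 < k) :
    ∃ C > 0, ∀ F F' : ℝ → ℝ,
      (∀ r ∈ Set.Ioo (0 : ℝ) δ, HasDerivAt F (F' r) r) →
      ContinuousOn F' (Set.Ioo (0 : ℝ) δ) →
      IntegrableOn (fun r => r ^ k * (F r ^ 2 + F' r ^ 2)) (Set.Ioo (0 : ℝ) δ) →
      (∫ r in Set.Ioo (0 : ℝ) δ, r ^ (k - 2) * F r ^ 2) ≤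
        C * ∫ r in Set.Ioo (0 : ℝ) δ, r ^ k * (F r ^ 2 + F' r ^ 2) := by
  have hk1 : 0 < k - 1 := by linarith
  set D := (2 / δ) ^ 2
  refine ⟨2 / (k - 1) * (D + 2 / (k - 1)) + D, by positivity, fun F F' hF hF' hInt => ?_⟩
  set I := ∫ r in Ioo 0 δ, r ^ k * (F r ^ 2 + F' r ^ 2)
  obtain ⟨b, hb, hbdry⟩ := exists_mem_Ioo_rpow_sub_one_mul_sq_le hδ hInt
  have hb0 : 0 < b := (half_pos hδ).trans hb.1
  have hsplit : Ioc 0 b ∪ Ioo b δ = Ioo 0 δ := Ioc_union_Ioo_eq_Ioo hb0.le hb.2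
  calc ∫ r in Ioo 0 δ, r ^ (k - 2) * F r ^ 2
      = ∫ r in Ioc 0 b ∪ Ioo b δ, r ^ (k - 2) * F r ^ 2 := by rw [hsplit]
    _ ≤ (∫ r in Ioc 0 b, r ^ (k - 2) * F r ^ 2) + ∫ r in Ioo b δ, r ^ (k - 2) * F r ^ 2 :=
        setIntegral_union_le_add (Ioc_disjoint_Ioi_same.mono_right Ioo_subset_Ioi_self)
          measurableSet_Ioc measurableSet_Ioo fun r hr => by
            have := (hsplit ▸ hr : r ∈ Ioo 0 δ).1
            positivity
    _ ≤ 2 / (k - 1) * (D * I + 2 / (k - 1) * I) + D * I := by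
        refine add_le_add ((setIntegral_Ioc_rpow_sub_two_mul_sq_le hk ⟨hb0, hb.2⟩ hF hF'
          hInt).trans ?_) (setIntegral_Ioo_rpow_sub_two_mul_sq_le hδ hb.1.le hInt)
        gcongr
    _ = _ := by ring
end

section
/- Let γ > 1 and let h : [0,∞) → ℝ solve the ODE h'' + h' - (1/(3γ-1))((1+t)^{1/(3γ-1)} + h)^{2-3γ} + η̄_rtt + η̄_rt = 0 with h(0) = h'(0) = 0, where η̄_r(t) = (1+t)^{1/(3γ-1)}. Then h(t) ≥ 0 for all t ≥ 0 and h is uniformly bounded: there is a constant C = C(γ) such that 0 ≤ h(t) ≤ C for all t ≥ 0. -/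
/-!
Write `a = 1/(3γ-1)`, `p = 2 - 3γ < 0` and `η̄ t = (1+t)^a`, so that `η̄' = a η̄^p` and
`N = η̄ + h` solves `N'' + N' = a N^p` with `N 0 = 1`, `N' 0 = a`.
The defect `D = N' - a N^p` vanishes at `0`, and wherever `D = 0` and `N > 0` one has
`D' = -a² p N^{2p-1} > 0`; hence `D ≥ 0` as long as `N > 0`, which makes `N` increasing and so
positive for all time. Comparing `N' ≥ a N^p` with `η̄' = a η̄^p` gives `N ≥ η̄`, i.e. `h ≥ 0`.
Then `(N' + N - η̄)' = a (N^p - η̄^p) ≤ 0`, so `h' + h ≤ a`, and therefore `h ≤ a`.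
-/

open Real Set

theorem monotoneOn_of_forall_hasDerivAt_nonneg {f f' : ℝ → ℝ} {s : Set ℝ} (hs : Convex ℝ s)
    (hf : ∀ x ∈ s, HasDerivAt f (f' x) x) (hf' : ∀ x ∈ interior s, 0 ≤ f' x) :
    MonotoneOn f s :=
  monotoneOn_of_hasDerivWithinAt_nonneg hs (fun x hx => (hf x hx).continuousAt.continuousWithinAt)
    (fun x hx => (hf x (interior_subset hx)).hasDerivWithinAt) hf'

theorem antitoneOn_of_forall_hasDerivAt_nonpos {f f' : ℝ → ℝ} {s : Set ℝ} (hs : Convex ℝ s)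
    (hf : ∀ x ∈ s, HasDerivAt f (f' x) x) (hf' : ∀ x ∈ interior s, f' x ≤ 0) :
    AntitoneOn f s :=
  antitoneOn_of_hasDerivWithinAt_nonpos hs (fun x hx => (hf x hx).continuousAt.continuousWithinAt)
    (fun x hx => (hf x (interior_subset hx)).hasDerivWithinAt) hf'

theorem hasDerivAt_one_add_rpow (c : ℝ) {t : ℝ} (ht : -1 < t) :
    HasDerivAt (fun s : ℝ => (1 + s) ^ c) (c * (1 + t) ^ (c - 1)) t := by
  simpa using
    ((hasDerivAt_id t).const_add 1).rpow_const (p := c) (Or.inl (by simp only [id]; linarith))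

theorem forall_mem_Icc_pos_of_forall_Ico_pos {f : ℝ → ℝ} {a b : ℝ}
    (hf : ContinuousOn f (Icc a b))
    (hstep : ∀ t ∈ Icc a b, (∀ s ∈ Ico a t, 0 < f s) → 0 < f t) :
    ∀ t ∈ Icc a b, 0 < f t := by
  by_contra! hbad
  set B := Icc a b ∩ f ⁻¹' Iic 0
  have hB : IsCompact B :=
    isCompact_Icc.of_isClosed_subset
      (hf.preimage_isClosed_of_isClosed isClosed_Icc isClosed_Iic) inter_subset_left
  obtain ⟨t₀, ht₀, hft₀⟩ := hbad
  have hmem : sInf B ∈ B := hB.sInf_mem ⟨t₀, ht₀, hft₀⟩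
  refine not_lt.2 hmem.2 (hstep _ hmem.1 fun s hs => ?_)
  by_contra! hfs
  exact not_le.2 hs.2
    (csInf_le hB.bddBelow ⟨⟨hs.1, hs.2.le.trans hmem.1.2⟩, hfs⟩)

theorem le_of_forall_hasDerivAt_add_self_le {f f' : ℝ → ℝ} {c : ℝ}
    (hf : ∀ t ≥ 0, HasDerivAt f (f' t) t) (hle : ∀ t ≥ 0, f' t + f t ≤ c) (h0 : f 0 ≤ c) :
    ∀ t ≥ 0, f t ≤ c := by
  intro t ht
  have hanti : AntitoneOn (fun u => exp u * (f u - c)) (Ici 0) := by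
    refine antitoneOn_of_forall_hasDerivAt_nonpos (convex_Ici 0)
      (fun u hu => (hasDerivAt_exp u).mul ((hf u hu).sub_const c)) fun u hu => ?_
    have := hle u (interior_subset hu)
    nlinarith [exp_pos u]
  have := hanti self_mem_Ici (mem_Ici.2 ht) ht
  simp only [exp_zero, one_mul] at this
  nlinarith [exp_pos t]

structure IsDampedRpowSolution (a p : ℝ) (N N' N'' : ℝ → ℝ) : Prop where
  hasDerivAt : ∀ t ≥ 0, HasDerivAt N (N' t) t
  hasDerivAt_deriv : ∀ t ≥ 0, HasDerivAt N' (N'' t) t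
  ode : ∀ t ≥ 0, N'' t + N' t = a * N t ^ p

namespace IsDampedRpowSolution

variable {a p : ℝ} {N N' N'' : ℝ → ℝ}

theorem rpow_le_deriv_of_pos (hN : IsDampedRpowSolution a p N N' N'') (ha : 0 < a) (hp : p < 0)
    (h0 : a * N 0 ^ p ≤ N' 0) {T : ℝ} (hpos : ∀ t ∈ Icc 0 T, 0 < N t) :
    ∀ t ∈ Icc 0 T, a * N t ^ p ≤ N' t := by
  have hderiv (x : ℝ) (hx : x ∈ Icc 0 T) :
      HasDerivAt (fun t => a * N t ^ p) (a * (N' x * p * N x ^ (p - 1))) x :=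
    ((hN.hasDerivAt x hx.1).rpow_const (Or.inl (hpos x hx).ne')).const_mul a
  refine image_le_of_deriv_right_lt_deriv_boundary'
    (fun x hx => (hderiv x hx).continuousAt.continuousWithinAt)
    (fun x hx => (hderiv x (Ico_subset_Icc_self hx)).hasDerivWithinAt) h0
    (fun x hx => (hN.hasDerivAt_deriv x hx.1).continuousAt.continuousWithinAt)
    (fun x hx => (hN.hasDerivAt_deriv x hx.1).hasDerivWithinAt) fun x hx hxeq => ?_
  -- at a zero of the defect `N' - a N ^ p` the equation forces `N'' = 0`
  have hN'' : N'' x = 0 := by linarith [hN.ode x hx.1]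
  have hNx := hpos x (Ico_subset_Icc_self hx)
  rw [hN'', ← hxeq]
  have : 0 < a * a * N x ^ p * N x ^ (p - 1) := by positivity
  nlinarith

theorem pos (hN : IsDampedRpowSolution a p N N' N'') (ha : 0 < a) (hp : p < 0) (hN0 : 0 < N 0)
    (h0 : a * N 0 ^ p ≤ N' 0) : ∀ t ≥ 0, 0 < N t := by
  intro T hT
  refine forall_mem_Icc_pos_of_forall_Ico_pos
    (fun x hx => (hN.hasDerivAt x hx.1).continuousAt.continuousWithinAt)
    (fun t ht hlt => ?_) T ⟨hT, le_rfl⟩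
  have hmono : MonotoneOn N (Icc 0 t) := by
    refine monotoneOn_of_forall_hasDerivAt_nonneg (convex_Icc 0 t)
      (fun x hx => hN.hasDerivAt x hx.1) fun x hx => ?_
    rw [interior_Icc] at hx
    have hpos : ∀ s ∈ Icc 0 x, 0 < N s := fun s hs => hlt s ⟨hs.1, hs.2.trans_lt hx.2⟩
    have := hN.rpow_le_deriv_of_pos ha hp h0 hpos x ⟨hx.1.le, le_rfl⟩
    have := rpow_pos_of_pos (hpos x ⟨hx.1.le, le_rfl⟩) p
    nlinarith
  exact hN0.trans_le (hmono ⟨le_rfl, ht.1⟩ ⟨ht.1, le_rfl⟩ ht.1)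

theorem rpow_le_deriv (hN : IsDampedRpowSolution a p N N' N'') (ha : 0 < a) (hp : p < 0)
    (hN0 : 0 < N 0) (h0 : a * N 0 ^ p ≤ N' 0) : ∀ t ≥ 0, a * N t ^ p ≤ N' t := fun t ht =>
  hN.rpow_le_deriv_of_pos ha hp h0 (fun s hs => hN.pos ha hp hN0 h0 s hs.1) t ⟨ht, le_rfl⟩

theorem deriv_add_sub_one_add_rpow_le (hN : IsDampedRpowSolution a p N N' N'') (ha : 0 ≤ a)
    (hp : p ≤ 0) (hpa : a * (1 - p) = 1) (hlow : ∀ t ≥ 0, (1 + t) ^ a ≤ N t) :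
    ∀ t ≥ 0, N' t + N t - (1 + t) ^ a ≤ N' 0 + N 0 - 1 := by
  intro t ht
  have hanti : AntitoneOn (fun u => N' u + N u - (1 + u) ^ a) (Ici 0) := by
    refine antitoneOn_of_forall_hasDerivAt_nonpos (convex_Ici 0) (fun u hu =>
      ((hN.hasDerivAt_deriv u hu).add (hN.hasDerivAt u hu)).sub
        (hasDerivAt_one_add_rpow a (by linarith [mem_Ici.1 hu]))) fun u hu => ?_
    have hu : (0 : ℝ) ≤ u := interior_subset hu
    have h1u : (0 : ℝ) < 1 + u := by linarith
    -- `η̄ = (1 + u) ^ a` solves `η̄' = a η̄ ^ p`, and `N ^ p ≤ η̄ ^ p` because `p ≤ 0`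
    have hpow : N u ^ p ≤ (1 + u) ^ (a - 1) := by
      calc N u ^ p ≤ ((1 + u) ^ a) ^ p := rpow_le_rpow_of_nonpos (by positivity) (hlow u hu) hp
        _ = (1 + u) ^ (a - 1) := by rw [← rpow_mul h1u.le]; congr 1; linarith
    rw [hN.ode u hu]
    nlinarith
  simpa using hanti self_mem_Ici (mem_Ici.2 ht) ht

end IsDampedRpowSolution

theorem one_add_rpow_le_of_rpow_le_deriv {a p : ℝ} {N N' : ℝ → ℝ} (ha : 0 < a)
    (hpa : a * (1 - p) = 1) (hN : ∀ t ≥ 0, HasDerivAt N (N' t) t) (hpos : ∀ t ≥ 0, 0 < N t)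
    (hN0 : N 0 = 1) (hle : ∀ t ≥ 0, a * N t ^ p ≤ N' t) : ∀ t ≥ 0, (1 + t) ^ a ≤ N t := by
  intro t ht
  -- `N ^ (1 - p) - u` is nondecreasing: its derivative is `(1 - p) N ^ (-p) N' - 1 ≥ 0`
  have hmono : MonotoneOn (fun u => N u ^ (1 - p) - u) (Ici 0) := by
    refine monotoneOn_of_forall_hasDerivAt_nonneg (convex_Ici 0)
      (fun u hu => ((hN u hu).rpow_const (Or.inl (hpos u hu).ne')).sub (hasDerivAt_id u))
      fun u hu => ?_
    have hu : (0 : ℝ) ≤ u := interior_subset hu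
    have hNu := hpos u hu
    have hprod : N u ^ p * N u ^ (1 - p - 1) = 1 := by
      rw [← rpow_add hNu]; norm_num
    have h1p : 0 < 1 - p := pos_of_mul_pos_right (by rw [hpa]; exact one_pos) ha.le
    have hle' := mul_le_mul_of_nonneg_right (hle u hu)
      (by positivity : (0 : ℝ) ≤ (1 - p) * N u ^ (1 - p - 1))
    have : a * N u ^ p * ((1 - p) * N u ^ (1 - p - 1)) = 1 := by
      calc a * N u ^ p * ((1 - p) * N u ^ (1 - p - 1))
          = a * (1 - p) * (N u ^ p * N u ^ (1 - p - 1)) := by ring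
        _ = 1 := by rw [hpa, hprod, one_mul]
    nlinarith
  have hstep := hmono self_mem_Ici (mem_Ici.2 ht) ht
  simp only [hN0, one_rpow, sub_zero] at hstep
  calc (1 + t) ^ a ≤ (N t ^ (1 - p)) ^ a := rpow_le_rpow (by linarith) (by linarith) ha.le
    _ = N t := by rw [← rpow_mul (hpos t ht).le, mul_comm, hpa, rpow_one]

theorem isDampedRpowSolution_one_add_rpow_add {a p : ℝ} {h h' h'' : ℝ → ℝ}
    (hd1 : ∀ t : ℝ, HasDerivAt h (h' t) t) (hd2 : ∀ t : ℝ, HasDerivAt h' (h'' t) t)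
    (hode : ∀ t ≥ (0 : ℝ), h'' t + h' t - a * ((1 + t) ^ a + h t) ^ p
      + a * (a - 1) * (1 + t) ^ (a - 2) + a * (1 + t) ^ (a - 1) = 0) :
    IsDampedRpowSolution a p (fun t => (1 + t) ^ a + h t) (fun t => a * (1 + t) ^ (a - 1) + h' t)
      (fun t => a * ((a - 1) * (1 + t) ^ (a - 2)) + h'' t) where
  hasDerivAt t ht := (hasDerivAt_one_add_rpow a (by linarith)).add (hd1 t)
  hasDerivAt_deriv t ht := by
    have := (hasDerivAt_one_add_rpow (a - 1) (t := t) (by linarith)).const_mul a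
    rw [sub_sub, one_add_one_eq_two] at this
    exact this.add (hd2 t)
  ode t ht := by linarith [hode t ht]

/-- The correction `h` solving `h'' + h' - (1/(3γ-1))(η̄_r + h)^{2-3γ} + η̄_rtt + η̄_rt = 0`
with zero initial data is nonnegative and uniformly bounded. -/
theorem correction_nonneg_bounded (γ : ℝ) (hγ : 1 < γ)
    (h h' h'' : ℝ → ℝ)
    (hd1 : ∀ t : ℝ, HasDerivAt h (h' t) t)
    (hd2 : ∀ t : ℝ, HasDerivAt h' (h'' t) t)
    (hode : ∀ t ≥ (0 : ℝ),
      h'' t + h' t - (1 / (3 * γ - 1)) * ((1 + t) ^ ((1 : ℝ) / (3 * γ - 1)) + h t) ^ (2 - 3 * γ)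
        + (1 / (3 * γ - 1)) * ((1 : ℝ) / (3 * γ - 1) - 1) * (1 + t) ^ ((1 : ℝ) / (3 * γ - 1) - 2)
        + (1 / (3 * γ - 1)) * (1 + t) ^ ((1 : ℝ) / (3 * γ - 1) - 1) = 0)
    (h0 : h 0 = 0) (h'0 : h' 0 = 0) :
    ∃ C : ℝ, ∀ t ≥ (0 : ℝ), 0 ≤ h t ∧ h t ≤ C := by
  have ha : 0 < 1 / (3 * γ - 1) := div_pos one_pos (by linarith)
  have hp : 2 - 3 * γ < 0 := by linarith
  have hpa : 1 / (3 * γ - 1) * (1 - (2 - 3 * γ)) = 1 := by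
    field_simp [show 3 * γ - 1 ≠ 0 by linarith]; ring
  set a : ℝ := 1 / (3 * γ - 1)
  have hN := isDampedRpowSolution_one_add_rpow_add hd1 hd2 hode
  have hN0 : (1 + 0) ^ a + h 0 = 1 := by simp [h0]
  have h0' : a * ((1 + 0) ^ a + h 0) ^ (2 - 3 * γ) ≤ a * (1 + 0) ^ (a - 1) + h' 0 := by
    simp [h0, h'0]
  have hN0pos : 0 < (1 + 0) ^ a + h 0 := by rw [hN0]; exact one_pos
  have hlow := one_add_rpow_le_of_rpow_le_deriv ha hpa hN.hasDerivAt (hN.pos ha hp hN0pos h0') hN0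
    (hN.rpow_le_deriv ha hp hN0pos h0')
  refine ⟨a, fun t ht => ⟨by linarith [hlow t ht], ?_⟩⟩
  refine le_of_forall_hasDerivAt_add_self_le (fun s _ => hd1 s) (fun s hs => ?_)
    (by rw [h0]; exact ha.le) t ht
  have hup := hN.deriv_add_sub_one_add_rpow_le ha.le hp.le hpa hlow s hs
  simp only [h0, h'0, add_zero, one_rpow, mul_one] at hup
  have : 0 ≤ a * (1 + s) ^ (a - 1) := by positivity
  linarith
end

section
/- Let γ > 1 and let f : [0,∞) → ℝ solve f'' + f' - (1/(3γ-1)) f^{2-3γ} = 0 with f(0) = 1, f'(0) = 1/(3γ-1), and suppose (1+t)^{1/(3γ-1)} ≤ f(t) ≤ K(1+t)^{1/(3γ-1)} for all t ≥ 0 and some K > 0. Then f'(t) ≥ 0 for all t ≥ 0; in fact f'(t) = (1/(3γ-1)) e^{-t} + (1/(3γ-1)) ∫₀^t e^{-(t-s)} f(s)^{2-3γ} ds. -/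
open Real Set

/-- Duhamel's formula for `g' + g = h`: `exp s * g s` is a primitive of `exp s * h s`. -/
theorem eq_exp_mul_add_integral_of_hasDerivAt_add_self {g g' h : ℝ → ℝ} {a b : ℝ}
    (hg : ∀ s ∈ uIcc a b, HasDerivAt g (g' s) s) (hode : ∀ s ∈ uIcc a b, g' s + g s = h s)
    (hh : ContinuousOn h (uIcc a b)) :
    g b = exp (-(b - a)) * g a + ∫ s in a..b, exp (-(b - s)) * h s := by
  have hprim : ∫ s in a..b, exp s * h s = exp b * g b - exp a * g a := by
    refine intervalIntegral.integral_eq_sub_of_hasDerivAt (f := fun s => exp s * g s)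
      (fun s hs => ?_)
      (continuous_exp.continuousOn.mul hh).intervalIntegrable
    rw [← hode s hs, mul_add, add_comm]
    exact (hasDerivAt_exp s).mul (hg s hs)
  have hshift : ∫ s in a..b, exp (-(b - s)) * h s = exp (-b) * ∫ s in a..b, exp s * h s := by
    rw [← intervalIntegral.integral_const_mul]
    refine intervalIntegral.integral_congr fun s _ => ?_
    rw [neg_sub, sub_eq_add_neg, exp_add]
    ring
  rw [hshift, hprim, neg_sub, sub_eq_add_neg, exp_add, exp_neg]
  field_simp
  ring

theorem eta_r_duhamel_and_monotone_general (γ K : ℝ) (hγ : 1 < γ)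
    (f f' f'' : ℝ → ℝ)
    (hd1 : ∀ t : ℝ, HasDerivAt f (f' t) t)
    (hd2 : ∀ t : ℝ, HasDerivAt f' (f'' t) t)
    (hode : ∀ t ≥ (0 : ℝ), f'' t + f' t - (1 / (3 * γ - 1)) * f t ^ (2 - 3 * γ) = 0)
    (hf'0 : f' 0 = 1 / (3 * γ - 1))
    (hbd : ∀ t ≥ (0 : ℝ), (1 + t) ^ ((1 : ℝ) / (3 * γ - 1)) ≤ f t ∧
      f t ≤ K * (1 + t) ^ ((1 : ℝ) / (3 * γ - 1))) :
    ∀ t ≥ (0 : ℝ),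
      f' t = (1 / (3 * γ - 1)) * Real.exp (-t)
          + (1 / (3 * γ - 1)) * ∫ s in (0 : ℝ)..t, Real.exp (-(t - s)) * f s ^ (2 - 3 * γ)
      ∧ 0 ≤ f' t := by
  intro t ht
  have hc : 0 < 1 / (3 * γ - 1) := one_div_pos.2 (by linarith)
  have hfpos : ∀ s ≥ (0 : ℝ), 0 < f s := fun s hs =>
    (rpow_pos_of_pos (by linarith) _).trans_le (hbd s hs).1
  have hIcc : uIcc 0 t = Icc 0 t := uIcc_of_le ht
  have hcont : ContinuousOn (fun s => 1 / (3 * γ - 1) * f s ^ (2 - 3 * γ)) (uIcc 0 t) := by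
    refine continuousOn_const.mul (ContinuousOn.rpow_const ?_ fun s hs => ?_)
    · exact (continuous_iff_continuousAt.2 fun s => (hd1 s).continuousAt).continuousOn
    · rw [hIcc] at hs
      exact Or.inl (hfpos s hs.1).ne'
  have hduh := eq_exp_mul_add_integral_of_hasDerivAt_add_self (fun s _ => hd2 s)
    (fun s hs => by rw [hIcc] at hs; linarith [hode s hs.1]) hcont
  simp_rw [mul_left_comm _ (1 / (3 * γ - 1)), intervalIntegral.integral_const_mul,
    sub_zero, hf'0, mul_comm (exp (-t))] at hduh
  refine ⟨hduh, hduh ▸ add_nonneg (by positivity) (mul_nonneg hc.le ?_)⟩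
  refine intervalIntegral.integral_nonneg ht fun s hs => ?_
  exact mul_nonneg (exp_nonneg _) (rpow_nonneg (hfpos s hs.1).le _)

/-- Duhamel formula and monotonicity for `f = η̃_r` solving
`f'' + f' - (1/(3γ-1)) f^{2-3γ} = 0` with `f(0)=1`, `f'(0)=1/(3γ-1)`. -/
theorem eta_r_duhamel_and_monotone (γ K : ℝ) (hγ : 1 < γ) (hK : 0 < K)
    (f f' f'' : ℝ → ℝ)
    (hd1 : ∀ t : ℝ, HasDerivAt f (f' t) t)
    (hd2 : ∀ t : ℝ, HasDerivAt f' (f'' t) t)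
    (hode : ∀ t ≥ (0 : ℝ), f'' t + f' t - (1 / (3 * γ - 1)) * f t ^ (2 - 3 * γ) = 0)
    (hf0 : f 0 = 1) (hf'0 : f' 0 = 1 / (3 * γ - 1))
    (hbd : ∀ t ≥ (0 : ℝ), (1 + t) ^ ((1 : ℝ) / (3 * γ - 1)) ≤ f t ∧
      f t ≤ K * (1 + t) ^ ((1 : ℝ) / (3 * γ - 1))) :
    ∀ t ≥ (0 : ℝ),
      f' t = (1 / (3 * γ - 1)) * Real.exp (-t)
          + (1 / (3 * γ - 1)) * ∫ s in (0 : ℝ)..t, Real.exp (-(t - s)) * f s ^ (2 - 3 * γ)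
      ∧ 0 ≤ f' t :=
  eta_r_duhamel_and_monotone_general γ K hγ f f' f'' hd1 hd2 hode hf'0 hbd
end

section
/- Let γ > 1 and let f : [0,∞) → ℝ be continuous with (1+t)^{1/(3γ-1)} ≤ f(t) ≤ K(1+t)^{1/(3γ-1)} for all t ≥ 0. Then there exists C > 0 (depending on γ, K) such that for all t ≥ 0: e^{-t} + ∫₀^t e^{-(t-s)} f(s)^{2-3γ} ds ≤ C (1+t)^{(2-3γ)/(3γ-1)}. -/
open Real MeasureTheory Set

/-!
With `α = (2 - 3γ)/(3γ - 1) ∈ [-1, 0)`, the lower bound on `f` gives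
`f(s)^{2-3γ} ≤ (1+s)^α`.
Split `∫₀^t e^{-(t-s)} (1+s)^α ds` at `t/2`: on `[0, t/2]` the kernel is at most `e^{-t/2}`,
which decays faster than `(1+t)^α` because `α ≥ -1`; on `[t/2, t]` the weight is at most
`(1+t/2)^α ≤ 2 (1+t)^α` while the kernel integrates to at most `1`.
-/

lemma exp_neg_half_le_two_mul_one_add_rpow {α u : ℝ} (hα : -1 ≤ α) (hu : 0 ≤ u) :
    exp (-(u / 2)) ≤ 2 * (1 + u) ^ α := by
  have hpos : 0 < (1 + u) / 2 := by linarith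
  have hexp : (1 + u) / 2 ≤ exp (u / 2) := by linarith [add_one_le_exp (u / 2)]
  calc exp (-(u / 2)) = (exp (u / 2))⁻¹ := exp_neg _
    _ ≤ ((1 + u) / 2)⁻¹ := inv_anti₀ hpos hexp
    _ = 2 * (1 + u) ^ (-1 : ℝ) := by rw [rpow_neg_one]; field_simp
    _ ≤ 2 * (1 + u) ^ α := by gcongr; linarith

lemma one_add_half_rpow_le_two_mul {α t : ℝ} (hα₁ : -1 ≤ α) (hα₀ : α ≤ 0)
    (ht : 0 ≤ t) :
    (1 + t / 2) ^ α ≤ 2 * (1 + t) ^ α := by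
  have h2α : (2 : ℝ) ^ (-α) ≤ 2 := by
    simpa using rpow_le_rpow_of_exponent_le one_le_two (neg_le.mp hα₁)
  calc (1 + t / 2) ^ α ≤ ((1 + t) * 2⁻¹) ^ α :=
        rpow_le_rpow_of_nonpos (by positivity) (by linarith) hα₀
    _ = (1 + t) ^ α * 2 ^ (-α) := by
        rw [mul_rpow (by linarith) (by norm_num), inv_rpow zero_le_two, rpow_neg zero_le_two]
    _ ≤ (1 + t) ^ α * 2 := by gcongr
    _ = 2 * (1 + t) ^ α := mul_comm _ _

lemma rpow_le_rpow_mul_of_rpow_le {x y β q : ℝ} (hx : 0 < x) (h : x ^ β ≤ y) (hq : q ≤ 0) :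
    y ^ q ≤ x ^ (β * q) := by
  rw [rpow_mul hx.le]
  exact rpow_le_rpow_of_nonpos (by positivity) h hq

lemma integral_exp_neg_sub (t a b : ℝ) :
    ∫ s in a..b, exp (-(t - s)) = exp (b - t) - exp (a - t) := by
  simp only [neg_sub, intervalIntegral.integral_comp_sub_right exp t, integral_exp]

lemma intervalIntegrable_exp_neg_sub_mul_one_add_rpow (t α : ℝ) {a b : ℝ} (ha : 0 ≤ a)
    (hb : 0 ≤ b) :
    IntervalIntegrable (fun s => exp (-(t - s)) * (1 + s) ^ α) volume a b := by
  refine ContinuousOn.intervalIntegrable ((continuous_exp.comp (by fun_prop)).continuousOn.mul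
    ((by fun_prop : Continuous fun s : ℝ => 1 + s).continuousOn.rpow_const fun s hs => Or.inl ?_))
  have : 0 ≤ s := (le_inf ha hb).trans hs.1
  positivity

lemma integral_exp_neg_sub_mul_one_add_rpow_le {α t a b : ℝ} (hα : α ≤ 0) (ha : 0 ≤ a)
    (hab : a ≤ b) :
    ∫ s in a..b, exp (-(t - s)) * (1 + s) ^ α ≤
      (1 + a) ^ α * (exp (b - t) - exp (a - t)) := by
  have hweight : ∀ s ∈ Icc a b,
      exp (-(t - s)) * (1 + s) ^ α ≤ exp (-(t - s)) * (1 + a) ^ α :=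
    fun s hs => mul_le_mul_of_nonneg_left
      (rpow_le_rpow_of_nonpos (by linarith) (by linarith [hs.1]) hα) (exp_pos _).le
  calc ∫ s in a..b, exp (-(t - s)) * (1 + s) ^ α
      ≤ ∫ s in a..b, exp (-(t - s)) * (1 + a) ^ α :=
        intervalIntegral.integral_mono_on hab
          (intervalIntegrable_exp_neg_sub_mul_one_add_rpow t α ha (ha.trans hab))
          ((by fun_prop : Continuous fun s => exp (-(t - s)) * (1 + a) ^ α).intervalIntegrable _ _)
          hweight
    _ = (1 + a) ^ α * (exp (b - t) - exp (a - t)) := by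
        rw [intervalIntegral.integral_mul_const, integral_exp_neg_sub, mul_comm]

lemma integral_exp_neg_sub_mul_one_add_rpow_le_four_mul {α t : ℝ} (hα₁ : -1 ≤ α)
    (hα₀ : α ≤ 0) (ht : 0 ≤ t) :
    ∫ s in (0 : ℝ)..t, exp (-(t - s)) * (1 + s) ^ α ≤ 4 * (1 + t) ^ α := by
  have ht₂ : 0 ≤ t / 2 := by linarith
  have hfirst := integral_exp_neg_sub_mul_one_add_rpow_le (t := t) hα₀ le_rfl ht₂
  have hsecond := integral_exp_neg_sub_mul_one_add_rpow_le (t := t) hα₀ ht₂ (half_le_self ht)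
  rw [add_zero, one_rpow, one_mul, show t / 2 - t = -(t / 2) by ring] at hfirst
  rw [sub_self, exp_zero] at hsecond
  have hweight : 0 ≤ (1 + t / 2) ^ α := by positivity
  calc ∫ s in (0 : ℝ)..t, exp (-(t - s)) * (1 + s) ^ α
      = (∫ s in (0 : ℝ)..t / 2, exp (-(t - s)) * (1 + s) ^ α)
          + ∫ s in t / 2..t, exp (-(t - s)) * (1 + s) ^ α :=
        (intervalIntegral.integral_add_adjacent_intervals
          (intervalIntegrable_exp_neg_sub_mul_one_add_rpow t α le_rfl ht₂)
          (intervalIntegrable_exp_neg_sub_mul_one_add_rpow t α ht₂ ht)).symm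
    _ ≤ exp (-(t / 2)) + (1 + t / 2) ^ α := by
        nlinarith [exp_pos (0 - t), mul_nonneg hweight (exp_pos (t / 2 - t)).le]
    _ ≤ 2 * (1 + t) ^ α + 2 * (1 + t) ^ α := by
        gcongr
        · exact exp_neg_half_le_two_mul_one_add_rpow hα₁ ht
        · exact one_add_half_rpow_le_two_mul hα₁ hα₀ ht
    _ = 4 * (1 + t) ^ α := by ring

theorem duhamel_decay_general (γ K : ℝ) (hγ : 1 < γ)
    (f : ℝ → ℝ) (hf : Continuous f)
    (hbd : ∀ t ≥ (0 : ℝ), (1 + t) ^ ((1 : ℝ) / (3 * γ - 1)) ≤ f t ∧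
      f t ≤ K * (1 + t) ^ ((1 : ℝ) / (3 * γ - 1))) :
    ∃ C > 0, ∀ t ≥ (0 : ℝ),
      Real.exp (-t) + (∫ s in (0 : ℝ)..t, Real.exp (-(t - s)) * f s ^ (2 - 3 * γ)) ≤
        C * (1 + t) ^ ((2 - 3 * γ) / (3 * γ - 1)) := by
  have hγ' : 0 < 3 * γ - 1 := by linarith
  set α := (2 - 3 * γ) / (3 * γ - 1) with hα
  have hα₀ : α ≤ 0 := div_nonpos_of_nonpos_of_nonneg (by linarith) hγ'.le
  have hα₁ : -1 ≤ α := by rw [le_div_iff₀ hγ']; linarith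
  have hfpos : ∀ s ≥ (0 : ℝ), 0 < f s := fun s hs =>
    (rpow_pos_of_pos (by linarith) _).trans_le (hbd s hs).1
  have hpow : ∀ s ≥ (0 : ℝ), f s ^ (2 - 3 * γ) ≤ (1 + s) ^ α := fun s hs =>
    (rpow_le_rpow_mul_of_rpow_le (by linarith) (hbd s hs).1 (by linarith)).trans_eq
      (by rw [hα]; field_simp)
  refine ⟨6, by norm_num, fun t ht => ?_⟩
  have hint : IntervalIntegrable (fun s => exp (-(t - s)) * f s ^ (2 - 3 * γ)) volume 0 t := by
    refine ContinuousOn.intervalIntegrable ((continuous_exp.comp (by fun_prop)).continuousOn.mul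
      (hf.continuousOn.rpow_const fun s hs => Or.inl (hfpos s ?_).ne'))
    exact (le_inf le_rfl ht).trans hs.1
  calc exp (-t) + ∫ s in (0 : ℝ)..t, exp (-(t - s)) * f s ^ (2 - 3 * γ)
      ≤ 2 * (1 + t) ^ α + ∫ s in (0 : ℝ)..t, exp (-(t - s)) * (1 + s) ^ α := by
        gcongr ?_ + ?_
        · exact (exp_le_exp.2 (by linarith)).trans (exp_neg_half_le_two_mul_one_add_rpow hα₁ ht)
        · exact intervalIntegral.integral_mono_on ht hint
            (intervalIntegrable_exp_neg_sub_mul_one_add_rpow t α le_rfl ht)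
            fun s hs => by gcongr; exact hpow s hs.1
    _ ≤ 2 * (1 + t) ^ α + 4 * (1 + t) ^ α := by
        gcongr; exact integral_exp_neg_sub_mul_one_add_rpow_le_four_mul hα₁ hα₀ ht
    _ = 6 * (1 + t) ^ α := by ring

/-- Decay estimate for the Duhamel integral: if `(1+t)^{1/(3γ-1)} ≤ f(t) ≤ K(1+t)^{1/(3γ-1)}`,
then `e^{-t} + ∫₀^t e^{-(t-s)} f(s)^{2-3γ} ds ≤ C (1+t)^{(2-3γ)/(3γ-1)}`. -/
theorem duhamel_decay (γ K : ℝ) (hγ : 1 < γ) (hK : 0 < K)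
    (f : ℝ → ℝ) (hf : Continuous f)
    (hbd : ∀ t ≥ (0 : ℝ), (1 + t) ^ ((1 : ℝ) / (3 * γ - 1)) ≤ f t ∧
      f t ≤ K * (1 + t) ^ ((1 : ℝ) / (3 * γ - 1))) :
    ∃ C > 0, ∀ t ≥ (0 : ℝ),
      Real.exp (-t) + (∫ s in (0 : ℝ)..t, Real.exp (-(t - s)) * f s ^ (2 - 3 * γ)) ≤
        C * (1 + t) ^ ((2 - 3 * γ) / (3 * γ - 1)) :=
  duhamel_decay_general γ K hγ f hf hbd
end

section
/- Let γ > 1 and suppose h : [0,∞) → [0,∞) is continuous, bounded, and satisfies h(t) ≤ C₀ (1+t)^{-(3γ-2)/(3γ-1)} ∫₀^t ((1+s)^{-2/(3γ-1)} h(s)² + (1+s)^{-1}) ds for all t ≥ 0. Then there exists C (depending on γ, C₀ and the bound on h) such that h(t) ≤ C (1+t)^{-(3γ-2)/(3γ-1)} ln(1+t+e) for all t ≥ 0. -/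
/-!
If `h ≤ K (1+t)^(-μ)` with `β + 2μ < 1`, inserting this bound into the integral inequality
gives `h ≲ (1+t)^(-(α+β+2μ-1)) + (1+t)^(-α) log (1+t)`. When `α + β/2 ≥ 1`, and using
`log (1+t) ≤ 2 √(1+t)`, the decay exponent thus improves from `μ` to
`min (μ + β/2) ((1-β)/2)`.
Starting from boundedness (`μ = 0`), finitely many steps reach the critical exponent
`(1-β)/2`, at which the weighted integral of `h²` grows only like `log (1+t)`; one more
application of the inequality gives the logarithmic bound. In the theorem
`α = (3γ-2)/(3γ-1)` and `β = 2/(3γ-1)`, so `α + β/2 = 1`.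
-/

open Real MeasureTheory intervalIntegral

lemma reach_of_min_add_step {P : ℝ → Prop} {d m : ℝ} (hd : 0 < d) (hm : 0 ≤ m) (h0 : P 0)
    (hstep : ∀ μ, 0 ≤ μ → μ < m → P μ → P (min (μ + d) m)) : P m := by
  have hiter : ∀ n : ℕ, P (min (n * d) m) := by
    intro n
    induction n with
    | zero => simpa [hm] using h0
    | succ n ih =>
      rcases lt_or_ge (n * d) m with hlt | hge
      · rw [min_eq_left hlt.le] at ih
        simpa [add_mul] using hstep _ (by positivity) hlt ih
      · rw [min_eq_right hge] at ih
        rwa [min_eq_right (by push_cast; nlinarith)]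
  obtain ⟨n, hn⟩ := exists_nat_ge (m / d)
  simpa [min_eq_right ((div_le_iff₀ hd).1 hn)] using hiter n

lemma continuousOn_one_add_rpow (q : ℝ) : ContinuousOn (fun s : ℝ => (1 + s) ^ q) (Set.Ici 0) :=
  (continuousOn_const.add continuousOn_id).rpow_const fun s (hs : 0 ≤ s) =>
    Or.inl (by linarith : (0 : ℝ) < 1 + s).ne'

lemma continuousOn_one_add_inv : ContinuousOn (fun s : ℝ => (1 + s)⁻¹) (Set.Ici 0) :=
  (continuousOn_const.add continuousOn_id).inv₀ fun s (hs : 0 ≤ s) =>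
    (by linarith : (0 : ℝ) < 1 + s).ne'

lemma integral_one_add_rpow_neg_le {q : ℝ} (hq : q < 1) (t : ℝ) :
    ∫ s in (0 : ℝ)..t, (1 + s) ^ (-q) ≤ (1 + t) ^ (1 - q) / (1 - q) := by
  rw [integral_comp_add_left (fun u : ℝ => u ^ (-q)), add_zero,
    integral_rpow (Or.inl (by linarith)), one_rpow, neg_add_eq_sub]
  gcongr
  linarith

lemma integral_one_add_inv {t : ℝ} (ht : 0 < 1 + t) :
    ∫ s in (0 : ℝ)..t, (1 + s)⁻¹ = log (1 + t) := by
  rw [integral_comp_add_left (fun u : ℝ => u⁻¹), add_zero, integral_inv_of_pos one_pos ht, div_one]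

def BootstrapIneq (C₀ α β : ℝ) (h : ℝ → ℝ) : Prop :=
  ∀ t ≥ (0 : ℝ), h t ≤ C₀ * (1 + t) ^ (-α) *
    ∫ s in (0 : ℝ)..t, ((1 + s) ^ (-β) * h s ^ 2 + (1 + s)⁻¹)

def PowerDecay (h : ℝ → ℝ) (μ : ℝ) : Prop :=
  ∃ K, ∀ t ≥ (0 : ℝ), h t ≤ K * (1 + t) ^ (-μ)

namespace BootstrapIneq

variable {C₀ α β : ℝ} {h : ℝ → ℝ}

lemma le_mul_integral_rpow_add_log (hH : BootstrapIneq C₀ α β h) (hC₀ : 0 ≤ C₀)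
    (hcont : ContinuousOn h (Set.Ici 0)) (hnonneg : ∀ t ≥ (0 : ℝ), 0 ≤ h t) {K μ : ℝ}
    (hK : ∀ t ≥ (0 : ℝ), h t ≤ K * (1 + t) ^ (-μ)) {t : ℝ} (ht : 0 ≤ t) :
    h t ≤ C₀ * (1 + t) ^ (-α) *
      (K ^ 2 * (∫ s in (0 : ℝ)..t, (1 + s) ^ (-(β + 2 * μ))) + log (1 + t)) := by
  have hint : ∀ f : ℝ → ℝ, ContinuousOn f (Set.Ici 0) → IntervalIntegrable f volume 0 t :=
    fun f hf => (hf.mono Set.Icc_subset_Ici_self).intervalIntegrable_of_Icc ht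
  have hweight : IntervalIntegrable (fun s => K ^ 2 * (1 + s) ^ (-(β + 2 * μ))) volume 0 t :=
    hint _ (continuousOn_const.mul (continuousOn_one_add_rpow _))
  have hinv := hint _ continuousOn_one_add_inv
  refine (hH t ht).trans (mul_le_mul_of_nonneg_left ?_ (by positivity))
  rw [← integral_one_add_inv (by linarith), ← intervalIntegral.integral_const_mul,
    ← integral_add hweight hinv]
  refine integral_mono_on ht
    ((hint _ ((continuousOn_one_add_rpow _).mul (hcont.pow 2))).add hinv) (hweight.add hinv)
    fun s hs => ?_
  have hs1 : 0 < 1 + s := by linarith [hs.1]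
  have hsq : h s ^ 2 ≤ (K * (1 + s) ^ (-μ)) ^ 2 :=
    pow_le_pow_left₀ (hnonneg s hs.1) (hK s hs.1) 2
  have hsplit : (1 + s) ^ (-(β + 2 * μ)) = (1 + s) ^ (-β) * ((1 + s) ^ (-μ)) ^ 2 := by
    rw [sq, ← rpow_add hs1, ← rpow_add hs1]
    ring_nf
  rw [hsplit]
  nlinarith [mul_le_mul_of_nonneg_left hsq (rpow_nonneg hs1.le (-β))]

lemma powerDecay_min_add (hH : BootstrapIneq C₀ α β h) (hC₀ : 0 ≤ C₀)
    (hcont : ContinuousOn h (Set.Ici 0)) (hnonneg : ∀ t ≥ (0 : ℝ), 0 ≤ h t)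
    (hαβ : 1 ≤ α + β / 2) {μ : ℝ} (hμ : 0 ≤ μ) (hμβ : μ < (1 - β) / 2)
    (hdec : PowerDecay h μ) :
    PowerDecay h (min (μ + β / 2) ((1 - β) / 2)) := by
  obtain ⟨K, hK⟩ := hdec
  set ν := min (μ + β / 2) ((1 - β) / 2)
  have hq : β + 2 * μ < 1 := by linarith
  refine ⟨C₀ * K ^ 2 / (1 - (β + 2 * μ)) + 2 * C₀, fun t ht => ?_⟩
  have ht1 : 0 < 1 + t := by linarith
  have hlog : log (1 + t) ≤ 2 * (1 + t) ^ (1 / 2 : ℝ) := by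
    linarith [log_le_rpow_div ht1.le one_half_pos]
  calc h t ≤ C₀ * (1 + t) ^ (-α) *
        (K ^ 2 * ((1 + t) ^ (1 - (β + 2 * μ)) / (1 - (β + 2 * μ)))
          + 2 * (1 + t) ^ (1 / 2 : ℝ)) := by
        refine (hH.le_mul_integral_rpow_add_log hC₀ hcont hnonneg hK ht).trans ?_
        gcongr
        exact integral_one_add_rpow_neg_le hq t
    _ = C₀ * K ^ 2 / (1 - (β + 2 * μ)) * (1 + t) ^ (-(α + β + 2 * μ - 1))
          + 2 * C₀ * (1 + t) ^ (-(α - 1 / 2)) := by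
        rw [show -(α + β + 2 * μ - 1) = -α + (1 - (β + 2 * μ)) by ring,
          show -(α - 1 / 2) = -α + 1 / 2 by ring, rpow_add ht1, rpow_add ht1]
        ring
    _ ≤ C₀ * K ^ 2 / (1 - (β + 2 * μ)) * (1 + t) ^ (-ν) + 2 * C₀ * (1 + t) ^ (-ν) := by
        have : 0 < 1 - (β + 2 * μ) := by linarith
        gcongr
        · linarith
        · exact (min_le_left _ _).trans (by linarith)
        · linarith
        · exact (min_le_right _ _).trans (by linarith)
    _ = (C₀ * K ^ 2 / (1 - (β + 2 * μ)) + 2 * C₀) * (1 + t) ^ (-ν) := by ring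

lemma exists_le_mul_log (hH : BootstrapIneq C₀ α β h) (hC₀ : 0 ≤ C₀)
    (hcont : ContinuousOn h (Set.Ici 0)) (hnonneg : ∀ t ≥ (0 : ℝ), 0 ≤ h t)
    (hdec : PowerDecay h ((1 - β) / 2)) :
    ∃ C, ∀ t ≥ (0 : ℝ), h t ≤ C * (1 + t) ^ (-α) * log (1 + t + exp 1) := by
  obtain ⟨K, hK⟩ := hdec
  refine ⟨C₀ * (K ^ 2 + 1), fun t ht => ?_⟩
  have ht1 : 0 < 1 + t := by linarith
  have hint : ∫ s in (0 : ℝ)..t, (1 + s) ^ (-(β + 2 * ((1 - β) / 2))) = log (1 + t) := by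
    simp_rw [show -(β + 2 * ((1 - β) / 2)) = -1 by ring, rpow_neg_one]
    exact integral_one_add_inv ht1
  have hlog : log (1 + t) ≤ log (1 + t + exp 1) := log_le_log ht1 (by linarith [exp_pos 1])
  calc h t ≤ C₀ * (1 + t) ^ (-α) * (K ^ 2 * log (1 + t) + log (1 + t)) := by
        simpa only [hint] using hH.le_mul_integral_rpow_add_log hC₀ hcont hnonneg hK ht
    _ = C₀ * (K ^ 2 + 1) * (1 + t) ^ (-α) * log (1 + t) := by ring
    _ ≤ C₀ * (K ^ 2 + 1) * (1 + t) ^ (-α) * log (1 + t + exp 1) := by gcongr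

end BootstrapIneq

/-- Bootstrap lemma: a bounded nonnegative continuous `h` satisfying the integral
inequality decays like `(1+t)^{-(3γ-2)/(3γ-1)} ln(1+t+e)`. -/
theorem bootstrap_log_decay (γ C₀ : ℝ) (hγ : 1 < γ) (hC₀ : 0 < C₀)
    (h : ℝ → ℝ) (hcont : Continuous h) (hnonneg : ∀ t, 0 ≤ h t)
    (hbdd : ∃ M : ℝ, ∀ t ≥ (0 : ℝ), h t ≤ M)
    (hineq : ∀ t ≥ (0 : ℝ),
      h t ≤ C₀ * (1 + t) ^ (-(3 * γ - 2) / (3 * γ - 1)) *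
        ∫ s in (0 : ℝ)..t, ((1 + s) ^ (-(2 : ℝ) / (3 * γ - 1)) * h s ^ 2 + (1 + s)⁻¹)) :
    ∃ C : ℝ, ∀ t ≥ (0 : ℝ),
      h t ≤ C * (1 + t) ^ (-(3 * γ - 2) / (3 * γ - 1)) * Real.log (1 + t + Real.exp 1) := by
  have hγ' : 2 < 3 * γ - 1 := by linarith
  set β := 2 / (3 * γ - 1)
  have hβ : 0 < β ∧ β < 1 := ⟨by positivity, (div_lt_one (by linarith)).2 hγ'⟩
  have hαβ : (3 * γ - 2) / (3 * γ - 1) + β / 2 = 1 := by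
    simp only [β]
    field_simp
    ring
  have hH : BootstrapIneq C₀ ((3 * γ - 2) / (3 * γ - 1)) β h := by
    intro t ht
    simpa only [neg_div] using hineq t ht
  have hnonneg' : ∀ t ≥ (0 : ℝ), 0 ≤ h t := fun t _ => hnonneg t
  have hdec : PowerDecay h ((1 - β) / 2) := by
    refine reach_of_min_add_step (half_pos hβ.1) (by linarith) ?_ fun μ hμ hμβ =>
      hH.powerDecay_min_add hC₀.le hcont.continuousOn hnonneg' hαβ.ge hμ hμβ
    obtain ⟨M, hM⟩ := hbdd
    exact ⟨M, by simpa using hM⟩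
  simpa only [neg_div] using hH.exists_le_mul_log hC₀.le hcont.continuousOn hnonneg' hdec
end
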